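/- In the standardized growth model on any compact metric space with any seed distribution μ, cov(3·E[C]) ≤ 9·E[C]; hence min_μ E_μ[C] ≥ min{r : cov(3r) ≤ 9r}. -/

import Mathlib

open MeasureTheory ProbabilityTheory Metric Set

/-!
Write `m = E[C]`; then `m ≥ E[τ₀] = 1` since nothing is covered before the first seed arrives,
and let `k = ⌊9m⌋`. By Markov's inequality `C < 3m` with probability at least `2/3`. In place of
Markov's inequality for the number of arrivals, a Chernoff bound with `E[e^{-τ_k}] = 2^{-(k+1)}`
shows that the `(k+1)`-st seed arrives after time `3m` with probability more than `1/3`. On an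
outcome where both happen, the at most `k` seeds present at the cover time carry balls of radius
less than `3m` covering `S`, so `cov(3m) ≤ k ≤ 9m`.
-/

noncomputable section

/-- The interarrival increments of the seed arrival times. -/
def interArrival {Ω : Type*} (τ : ℕ → Ω → ℝ) : ℕ → Ω → ℝ
  | 0 => τ 0
  | (i+1) => fun ω => τ (i+1) ω - τ i ω

/-- The covered region at time `t` in the standardized growth model. -/
def coveredSet {S : Type*} [MetricSpace S] {Ω : Type*} (τ : ℕ → Ω → ℝ)
    (σs : ℕ → Ω → S) (ω : Ω) (t : ℝ) : Set S :=
  ⋃ i ∈ {i : ℕ | τ i ω ≤ t}, Metric.closedBall (σs i ω) (t - τ i ω)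

/-- The cover time of the whole space. -/
def coverTime {S : Type*} [MetricSpace S] {Ω : Type*} (τ : ℕ → Ω → ℝ)
    (σs : ℕ → Ω → S) (ω : Ω) : ℝ :=
  sInf {t : ℝ | 0 ≤ t ∧ coveredSet τ σs ω t = Set.univ}

/-- The standardized growth model (`λ = v = 1`): seeds arrive at the times
`0 < τ 0 < τ 1 < ⋯` of a rate-1 Poisson process (i.i.d. Exponential(1) interarrivals),
at i.i.d. positions `σs i` with distribution `μ`, all jointly independent. -/
structure IsGrowthModel {S : Type*} [MetricSpace S] [MeasurableSpace S]
    {Ω : Type*} [MeasurableSpace Ω] (P : Measure Ω) (μ : Measure S)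
    (τ : ℕ → Ω → ℝ) (σs : ℕ → Ω → S) : Prop where
  meas_τ : ∀ i, Measurable (τ i)
  meas_σ : ∀ i, Measurable (σs i)
  pos : ∀ ω, 0 < τ 0 ω
  mono : ∀ ω, StrictMono fun i => τ i ω
  tendsto : ∀ ω, Filter.Tendsto (fun i => τ i ω) Filter.atTop Filter.atTop
  dist : ∀ i, P.map (fun ω => (interArrival τ i ω, σs i ω)) = (expMeasure 1).prod μ
  indep : iIndepFun
    (fun i ω => (interArrival τ i ω, σs i ω)) P

/-- `covNum S r` is the minimum number of closed balls of radius `r` needed to cover `S`. -/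
def covNum (S : Type*) [MetricSpace S] (r : ℝ) : ℕ :=
  sInf {n : ℕ | ∃ f : Fin n → S, (Set.univ : Set S) ⊆ ⋃ i, Metric.closedBall (f i) r}

lemma integral_expMeasure {r : ℝ} (hr : 0 ≤ r) (f : ℝ → ℝ) :
    ∫ x, f x ∂expMeasure r = ∫ x in Ioi 0, r * Real.exp (-(r * x)) * f x := by
  have hdensity : ∀ x, (exponentialPDF r x).toReal =
      (Ici 0).indicator (fun x => r * Real.exp (-(r * x))) x := by
    intro x
    simp only [exponentialPDF_eq, indicator_apply, mem_Ici]
    split_ifs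
    · exact ENNReal.toReal_ofReal (by positivity)
    · exact ENNReal.toReal_ofReal le_rfl
  rw [show expMeasure r = volume.withDensity (exponentialPDF r) from rfl,
    integral_withDensity_eq_integral_toReal_smul
      (show Measurable (exponentialPDF r) from (measurable_exponentialPDFReal r).ennreal_ofReal)
      (ae_of_all _ fun _ => ENNReal.ofReal_lt_top)]
  simp_rw [hdensity, smul_eq_mul, ← indicator_mul_left, integral_indicator measurableSet_Ici,
    integral_Ici_eq_integral_Ioi]

lemma mgf_id_expMeasure {r t : ℝ} (hr : 0 ≤ r) (ht : t < r) :
    mgf id (expMeasure r) t = r / (r - t) := by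
  have hexp : ∀ x, r * Real.exp (-(r * x)) * Real.exp (t * id x) =
      r * Real.exp ((t - r) * x) := by
    intro x
    rw [mul_assoc, ← Real.exp_add, id]
    ring_nf
  rw [mgf, integral_expMeasure hr]
  simp_rw [hexp]
  rw [integral_const_mul, integral_exp_mul_Ioi (by linarith) 0, mul_zero, Real.exp_zero,
    neg_div, ← div_neg, neg_sub, mul_one_div]

lemma integral_id_expMeasure {r : ℝ} (hr : 0 < r) : ∫ x, x ∂expMeasure r = r⁻¹ := by
  have hgamma := Real.integral_rpow_mul_exp_neg_mul_Ioi two_pos hr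
  calc ∫ x, x ∂expMeasure r
      = r * ∫ x in Ioi (0 : ℝ), x ^ ((2 : ℝ) - 1) * Real.exp (-(r * x)) := by
        rw [integral_expMeasure hr.le, ← integral_const_mul]
        refine setIntegral_congr_fun measurableSet_Ioi fun x _ => ?_
        norm_num
        ring
    _ = r⁻¹ := by
        rw [hgamma, Real.Gamma_two, mul_one, Real.rpow_two]
        field_simp

lemma measureReal_ge_mul_integral_le_inv {α : Type*} [MeasurableSpace α] {μ : Measure α}
    {f : α → ℝ} (hf : 0 ≤ᵐ[μ] f) (hfi : Integrable f μ) (hpos : 0 < ∫ x, f x ∂μ)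
    {c : ℝ} (hc : 0 < c) :
    μ.real {x | c * ∫ x, f x ∂μ ≤ f x} ≤ c⁻¹ := by
  have hmarkov := mul_meas_ge_le_integral_of_nonneg hf hfi (c * ∫ x, f x ∂μ)
  rw [← one_div, le_div_iff₀' hc]
  exact le_of_mul_le_mul_right (by linarith) hpos

lemma exists_notMem_notMem_of_measureReal_add_lt_one {α : Type*} [MeasurableSpace α]
    {μ : Measure α} [IsProbabilityMeasure μ] {s t : Set α} (h : μ.real s + μ.real t < 1) :
    ∃ x, x ∉ s ∧ x ∉ t := by
  by_contra! hcover
  have hunion : univ ⊆ s ∪ t := fun x _ => or_iff_not_imp_left.2 (hcover x)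
  have := (measureReal_mono hunion).trans (measureReal_union_le (μ := μ) s t)
  rw [probReal_univ] at this
  linarith

lemma exp_mul_inv_two_pow_floor_lt {m : ℝ} (hm : 1 ≤ m) :
    Real.exp (3 * m) * 2⁻¹ ^ (⌊9 * m⌋₊ + 1) < 2 / 3 := by
  set n : ℕ := ⌊9 * m⌋₊ + 1
  have hn : 9 * m < n := by simpa [n] using Nat.lt_floor_add_one (9 * m)
  have hlog := Real.log_two_gt_d9
  have hpow : (2 : ℝ)⁻¹ ^ n = Real.exp (-(n * Real.log 2)) := by
    rw [Real.exp_neg, Real.exp_nat_mul, Real.exp_log two_pos, inv_pow]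
  calc Real.exp (3 * m) * 2⁻¹ ^ n = Real.exp (3 * m - n * Real.log 2) := by
        rw [hpow, ← Real.exp_add, sub_eq_add_neg]
    _ ≤ Real.exp (-1) := Real.exp_le_exp.2 (by nlinarith)
    _ < 2 / 3 := by linarith [Real.exp_neg_one_lt_half]

lemma sum_range_interArrival {Ω : Type*} (τ : ℕ → Ω → ℝ) (k : ℕ) (ω : Ω) :
    ∑ i ∈ Finset.range (k + 1), interArrival τ i ω = τ k ω := by
  induction k with
  | zero => simp [interArrival]
  | succ k ih =>
    rw [Finset.sum_range_succ, ih, interArrival]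
    ring

lemma measurable_interArrival {Ω : Type*} [MeasurableSpace Ω] {τ : ℕ → Ω → ℝ}
    (hτ : ∀ i, Measurable (τ i)) : ∀ i, Measurable (interArrival τ i)
  | 0 => hτ 0
  | i + 1 => (hτ (i + 1)).sub (hτ i)

section Covering

variable {S : Type*} [MetricSpace S] {Ω : Type*} {τ : ℕ → Ω → ℝ} {σs : ℕ → Ω → S} {ω : Ω}

lemma nonempty_coverTimes [CompactSpace S] (h0 : 0 ≤ τ 0 ω) :
    {t : ℝ | 0 ≤ t ∧ coveredSet τ σs ω t = univ}.Nonempty := by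
  refine ⟨τ 0 ω + diam (univ : Set S), by linarith [diam_nonneg (s := (univ : Set S))], ?_⟩
  refine eq_univ_of_forall fun x => mem_biUnion (x := 0) (le_add_of_nonneg_right diam_nonneg) ?_
  rw [mem_closedBall, add_sub_cancel_left]
  exact dist_le_diam_of_mem isBounded_of_compactSpace (mem_univ _) (mem_univ _)

lemma arrival_zero_le_coverTime [CompactSpace S] [Nonempty S] (h0 : 0 ≤ τ 0 ω)
    (hmono : Monotone (τ · ω)) : τ 0 ω ≤ coverTime τ σs ω := by
  refine le_csInf (nonempty_coverTimes h0) fun t ⟨_, hcov⟩ => ?_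
  have hx : Classical.arbitrary S ∈ coveredSet τ σs ω t := hcov ▸ mem_univ _
  obtain ⟨i, hi, -⟩ := mem_iUnion₂.1 hx
  exact (hmono (Nat.zero_le i)).trans hi

lemma covNum_le_of_coverTime_lt [CompactSpace S] (h0 : 0 ≤ τ 0 ω) (hmono : StrictMono (τ · ω))
    {r : ℝ} {k : ℕ} (hC : coverTime τ σs ω < r) (hk : r ≤ τ k ω) : covNum S r ≤ k := by
  obtain ⟨t, ⟨-, hcov⟩, htr⟩ := exists_lt_of_csInf_lt (nonempty_coverTimes h0) hC
  refine Nat.sInf_le ⟨fun i : Fin k => σs i ω, fun x _ => ?_⟩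
  have hx : x ∈ coveredSet τ σs ω t := hcov ▸ mem_univ x
  obtain ⟨i, hi, hxi⟩ := mem_iUnion₂.1 hx
  have hik : i < k := hmono.lt_iff_lt.1 (lt_of_le_of_lt hi (htr.trans_le hk))
  refine mem_iUnion.2 ⟨⟨i, hik⟩, closedBall_subset_closedBall ?_ hxi⟩
  linarith [hmono.monotone (Nat.zero_le i)]

end Covering

namespace IsGrowthModel

variable {S : Type*} [MetricSpace S] [MeasurableSpace S] {Ω : Type*} [MeasurableSpace Ω]
  {P : Measure Ω} {μ : Measure S} {τ : ℕ → Ω → ℝ} {σs : ℕ → Ω → S}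

lemma arrival_nonneg (h : IsGrowthModel P μ τ σs) (k : ℕ) (ω : Ω) : 0 ≤ τ k ω :=
  (h.pos ω).le.trans ((h.mono ω).monotone (Nat.zero_le k))

lemma map_interArrival [IsProbabilityMeasure μ] (h : IsGrowthModel P μ τ σs) (i : ℕ) :
    P.map (interArrival τ i) = expMeasure 1 := by
  have hpair : Measurable fun ω => (interArrival τ i ω, σs i ω) :=
    (measurable_interArrival h.meas_τ i).prodMk (h.meas_σ i)
  change P.map (Prod.fst ∘ fun ω => (interArrival τ i ω, σs i ω)) = _
  rw [← Measure.map_map measurable_fst hpair, h.dist i, Measure.map_fst_prod, measure_univ,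
    one_smul]

lemma mgf_arrival [IsProbabilityMeasure μ] (h : IsGrowthModel P μ τ σs) (k : ℕ) {t : ℝ}
    (ht : t < 1) : mgf (τ k) P t = (1 / (1 - t)) ^ (k + 1) := by
  have hindep : iIndepFun (interArrival τ) P :=
    h.indep.comp (fun _ => Prod.fst) fun _ => measurable_fst
  have hsum : τ k = ∑ i ∈ Finset.range (k + 1), interArrival τ i := by
    ext ω
    rw [Finset.sum_apply, sum_range_interArrival]
  have hfactor : ∀ i, mgf (interArrival τ i) P t = 1 / (1 - t) := fun i => by
    rw [← mgf_id_map (measurable_interArrival h.meas_τ i).aemeasurable, h.map_interArrival i,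
      mgf_id_expMeasure zero_le_one ht]
  rw [hsum, hindep.mgf_sum (measurable_interArrival h.meas_τ),
    Finset.prod_congr rfl fun i _ => hfactor i, Finset.prod_const, Finset.card_range]

lemma measureReal_arrival_le [IsFiniteMeasure P] [IsProbabilityMeasure μ]
    (h : IsGrowthModel P μ τ σs) (k : ℕ) (x : ℝ) :
    P.real {ω | τ k ω ≤ x} ≤ Real.exp x * 2⁻¹ ^ (k + 1) := by
  have hint : Integrable (fun ω => Real.exp (-1 * τ k ω)) P := by
    refine .of_bound ((h.meas_τ k).const_mul (-1)).exp.aestronglyMeasurable 1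
      (ae_of_all _ fun ω => ?_)
    rw [Real.norm_of_nonneg (Real.exp_pos _).le, Real.exp_le_one_iff]
    linarith [h.arrival_nonneg k ω]
  have hchernoff := measure_le_le_exp_mul_mgf x (by norm_num) hint
  rwa [h.mgf_arrival k (by norm_num), neg_neg, one_mul, show (1 : ℝ) / (1 - -1) = 2⁻¹ by norm_num]
    at hchernoff

lemma integral_arrival_zero [IsProbabilityMeasure μ] (h : IsGrowthModel P μ τ σs) :
    ∫ ω, τ 0 ω ∂P = 1 := by
  calc ∫ ω, τ 0 ω ∂P = ∫ x, x ∂P.map (interArrival τ 0) :=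
        (integral_map (h.meas_τ 0).aemeasurable aestronglyMeasurable_id).symm
    _ = 1 := by rw [h.map_interArrival 0, integral_id_expMeasure one_pos, inv_one]

lemma coverTime_nonneg [CompactSpace S] [Nonempty S] (h : IsGrowthModel P μ τ σs) (ω : Ω) :
    0 ≤ coverTime τ σs ω :=
  (h.arrival_nonneg 0 ω).trans
    (arrival_zero_le_coverTime (h.arrival_nonneg 0 ω) (h.mono ω).monotone)

lemma one_le_integral_coverTime [CompactSpace S] [Nonempty S] [IsProbabilityMeasure μ]
    (h : IsGrowthModel P μ τ σs) (hint : Integrable (coverTime τ σs) P) :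
    1 ≤ ∫ ω, coverTime τ σs ω ∂P :=
  h.integral_arrival_zero ▸ integral_mono_of_nonneg (ae_of_all _ (h.arrival_nonneg 0)) hint
    (ae_of_all _ fun ω => arrival_zero_le_coverTime (h.arrival_nonneg 0 ω) (h.mono ω).monotone)

end IsGrowthModel

theorem growth_model_covering_lower_bound_general
    {S : Type*} [MetricSpace S] [CompactSpace S] [Nonempty S]
    [MeasurableSpace S]
    {Ω : Type*} [MeasurableSpace Ω] (P : Measure Ω) [IsProbabilityMeasure P]
    (μ : Measure S) [IsProbabilityMeasure μ]
    (τ : ℕ → Ω → ℝ) (σs : ℕ → Ω → S)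
    (hmodel : IsGrowthModel P μ τ σs)
    (hint : Integrable (coverTime τ σs) P) :
    (covNum S (3 * ∫ ω, coverTime τ σs ω ∂P) : ℝ) ≤ 9 * ∫ ω, coverTime τ σs ω ∂P := by
  set m := ∫ ω, coverTime τ σs ω ∂P
  set k := ⌊9 * m⌋₊
  have hm : 1 ≤ m := hmodel.one_le_integral_coverTime hint
  have hcoverLate : P.real {ω | 3 * m ≤ coverTime τ σs ω} ≤ 3⁻¹ :=
    measureReal_ge_mul_integral_le_inv (ae_of_all _ hmodel.coverTime_nonneg) hint (by linarith)
      three_pos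
  have harrivalEarly : P.real {ω | τ k ω ≤ 3 * m} < 2 / 3 :=
    (hmodel.measureReal_arrival_le k (3 * m)).trans_lt (exp_mul_inv_two_pow_floor_lt hm)
  obtain ⟨ω, hCω, hτω⟩ :=
    exists_notMem_notMem_of_measureReal_add_lt_one (μ := P) (s := {ω | 3 * m ≤ coverTime τ σs ω})
      (t := {ω | τ k ω ≤ 3 * m}) (by linarith)
  have hcov : covNum S (3 * m) ≤ k := covNum_le_of_coverTime_lt (hmodel.arrival_nonneg 0 ω)
    (hmodel.mono ω) (not_le.1 hCω) (not_le.1 hτω).le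
  calc (covNum S (3 * m) : ℝ) ≤ k := by exact_mod_cast hcov
    _ ≤ 9 * m := Nat.floor_le (by linarith)

/-- In the standardized growth model with any seed distribution `μ`,
`cov(3 E C) ≤ 9 E C`; hence `min_μ E_μ C ≥ min {r : cov(3r) ≤ 9r}`. -/
theorem growth_model_covering_lower_bound
    {S : Type*} [MetricSpace S] [CompactSpace S] [Nonempty S]
    [MeasurableSpace S] [BorelSpace S]
    {Ω : Type*} [MeasurableSpace Ω] (P : Measure Ω) [IsProbabilityMeasure P]
    (μ : Measure S) [IsProbabilityMeasure μ]
    (τ : ℕ → Ω → ℝ) (σs : ℕ → Ω → S)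
    (hmodel : IsGrowthModel P μ τ σs)
    (hint : Integrable (coverTime τ σs) P) :
    (covNum S (3 * ∫ ω, coverTime τ σs ω ∂P) : ℝ) ≤ 9 * ∫ ω, coverTime τ σs ω ∂P :=
  growth_model_covering_lower_bound_general P μ τ σs hmodel hint

end
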